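/- arXiv:0803.3867 — 3 statements merged into one kernel-verified Lean document; each statement's English description precedes it below -/
import Mathlib

section
/- Let H be a complex Hilbert space and let ∘ : E(H) × E(H) → E(H) satisfy the duality condition: A∘ρ is trace-class and Tr((A∘ρ)B) = Tr(ρ(A∘B)) for all ρ ∈ D(H) and A,B ∈ E(H). Then for all A,B ∈ E(H) and all λ ∈ [0,1], A∘(λB) = λ(A∘B). -/
/-!
Common setup: effects, density operators, trace, square roots and the strong
operator topology on a complex Hilbert space `H`, together with the five
conditions (duality, unit, weak associativity, continuity, purity) defining a
sequential product on the set `E(H)` of quantum effects.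
-/

set_option maxHeartbeats 1000000
set_option synthInstance.maxHeartbeats 1000000

open scoped InnerProductSpace ComplexOrder
open Filter

noncomputable section

variable (H : Type*) [NormedAddCommGroup H] [InnerProductSpace ℂ H] [CompleteSpace H]

/-- The index set of a fixed Hilbert basis of `H`. -/
def stdIdx : Set H := (exists_hilbertBasis ℂ H).choose

/-- A fixed Hilbert basis of `H`. -/
def stdBasis : HilbertBasis (stdIdx H) ℂ H := (exists_hilbertBasis ℂ H).choose_spec.choose

variable {H}

/-- The positive square root `A^{1/2}` of a (positive) operator `A`. -/
def sqrtOp (A : H →L[ℂ] H) : H →L[ℂ] H := CFC.sqrt A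

/-- The trace of an operator, computed in the fixed Hilbert basis. -/
def traceOp (T : H →L[ℂ] H) : ℂ := ∑' i, ⟪(stdBasis H i : H), T (stdBasis H i)⟫_ℂ

/-- `T` is trace-class: `|T| = (T*T)^{1/2}` has finite trace. -/
def IsTraceClass (T : H →L[ℂ] H) : Prop :=
  Summable fun i => ⟪(stdBasis H i : H), sqrtOp (star T * T) (stdBasis H i)⟫_ℂ

/-- A quantum effect: an operator `A` with `0 ≤ A ≤ 1` in the Loewner order (in
particular `A` is bounded and self-adjoint).  `E(H)` is the set of effects. -/
def IsEffect (A : H →L[ℂ] H) : Prop := 0 ≤ A ∧ A ≤ 1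

/-- A density operator: a positive trace-class operator of unit trace.
`D(H)` is the set of density operators. -/
def IsDensity (ρ : H →L[ℂ] H) : Prop := 0 ≤ ρ ∧ IsTraceClass ρ ∧ traceOp ρ = 1

variable (H) in
/-- The strong operator topology on bounded operators: the topology of pointwise
convergence (as maps into `H` with its norm topology). -/
def sot : TopologicalSpace (H →L[ℂ] H) :=
  TopologicalSpace.induced (fun T => (T : H → H)) inferInstance

/-- `p` is a rank-one orthogonal projection. -/
def IsRankOneProjection (p : H →L[ℂ] H) : Prop :=
  IsIdempotentElem p ∧ IsSelfAdjoint p ∧ LinearMap.rank (p : H →ₗ[ℂ] H) = 1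

/-- `P_ψ`: the rank-one orthogonal projection onto the span of a unit vector `ψ`,
`x ↦ ⟪ψ, x⟫ • ψ`. -/
def projVec (ψ : H) : H →L[ℂ] H := (innerSL ℂ ψ).smulRight ψ

/-- `op` is a binary operation on `E(H)`: it maps pairs of effects to effects. -/
def EffectClosed (op : (H →L[ℂ] H) → (H →L[ℂ] H) → (H →L[ℂ] H)) : Prop :=
  ∀ A B, IsEffect A → IsEffect B → IsEffect (op A B)

/-- Condition 1 (Duality): for all effects `A, B` and densities `ρ`, the operator
`A ∘ ρ` is trace-class and `Tr((A∘ρ)B) = Tr(ρ(A∘B))`. -/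
def DualityCond (op : (H →L[ℂ] H) → (H →L[ℂ] H) → (H →L[ℂ] H)) : Prop :=
  ∀ A B ρ : H →L[ℂ] H, IsEffect A → IsEffect B → IsDensity ρ →
    IsTraceClass (op A ρ) ∧ traceOp (op A ρ * B) = traceOp (ρ * op A B)

/-- Condition 2 (Unit): `A ∘ I = I ∘ A = A` for every effect `A`. -/
def UnitCond (op : (H →L[ℂ] H) → (H →L[ℂ] H) → (H →L[ℂ] H)) : Prop :=
  ∀ A : H →L[ℂ] H, IsEffect A → op A 1 = A ∧ op 1 A = A

/-- Condition 3 (Weak associativity): `A² ∘ B = A ∘ (A ∘ B)` for all effects `A, B`. -/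
def WeakAssocCond (op : (H →L[ℂ] H) → (H →L[ℂ] H) → (H →L[ℂ] H)) : Prop :=
  ∀ A B : H →L[ℂ] H, IsEffect A → IsEffect B → op (A * A) B = op A (op A B)

/-- Condition 4 (Continuity): for each fixed effect `B`, the map `A ↦ A ∘ B` is
continuous on `E(H)` for the strong operator topology. -/
def ContinuityCond (op : (H →L[ℂ] H) → (H →L[ℂ] H) → (H →L[ℂ] H)) : Prop :=
  ∀ B : H →L[ℂ] H, IsEffect B →
    @ContinuousOn _ _ (sot H) (sot H) (fun A => op A B) {A | IsEffect A}

/-- Condition 5 (Purity): for every effect `A` and every rank-one orthogonal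
projection `p`, the operator `A ∘ p` has rank at most `1`. -/
def PurityCond (op : (H →L[ℂ] H) → (H →L[ℂ] H) → (H →L[ℂ] H)) : Prop :=
  ∀ A p : H →L[ℂ] H, IsEffect A → IsRankOneProjection p →
    LinearMap.rank ((op A p) : H →ₗ[ℂ] H) ≤ 1

/-!
Testing the duality condition against the pure state `ρ = P_ψ` gives
`⟪ψ, (A ∘ C) ψ⟫ = Tr((A ∘ P_ψ) C)`, whose right-hand side is linear in `C`. On a complex
Hilbert space an operator is determined by its quadratic form on unit vectors, so
`A ∘ (λB) = λ(A ∘ B)`.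
-/

section

variable {E : Type*} [NormedAddCommGroup E] [InnerProductSpace ℂ E]

lemma projVec_eq_rankOne (ψ : E) : projVec ψ = InnerProductSpace.rankOne ℂ ψ ψ := rfl

lemma ext_inner_self_of_norm_eq_one {T S : E →L[ℂ] E}
    (h : ∀ ψ : E, ‖ψ‖ = 1 → ⟪ψ, T ψ⟫_ℂ = ⟪ψ, S ψ⟫_ℂ) : T = S := by
  refine ContinuousLinearMap.coe_injective <| (ext_inner_map _ _).mp fun x => ?_
  rcases eq_or_ne x 0 with rfl | hx
  · simp
  obtain ⟨r, ψ, hψ, rfl⟩ : ∃ (r : ℂ) (ψ : E), ‖ψ‖ = 1 ∧ x = r • ψ :=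
    ⟨‖x‖, (‖x‖ : ℂ)⁻¹ • x, by simp [norm_smul, hx], by simp [smul_smul, hx]⟩
  have hTS : ⟪T ψ, ψ⟫_ℂ = ⟪S ψ, ψ⟫_ℂ := by rw [← inner_conj_symm, h ψ hψ, inner_conj_symm]
  simp [inner_smul_left, inner_smul_right, hTS]

end

lemma isEffect_ofReal_smul {B : H →L[ℂ] H} (hB : IsEffect B) {l : ℝ}
    (hl : l ∈ Set.Icc (0 : ℝ) 1) : IsEffect ((l : ℂ) • B) := by
  have hl₀ : (0 : ℂ) ≤ l := by exact_mod_cast hl.1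
  have hl₁ : (l : ℂ) ≤ 1 := by exact_mod_cast hl.2
  refine ⟨smul_nonneg hl₀ hB.1, ?_⟩
  calc (l : ℂ) • B ≤ (l : ℂ) • 1 := smul_le_smul_of_nonneg_left hB.2 hl₀
    _ ≤ (1 : ℂ) • 1 := smul_le_smul_of_nonneg_right hl₁ zero_le_one
    _ = 1 := one_smul ℂ 1

lemma traceOp_smul (c : ℂ) (T : H →L[ℂ] H) : traceOp (c • T) = c * traceOp T := by
  simp only [traceOp, FunLike.coe_smul, Pi.smul_apply, inner_smul_right, tsum_mul_left]

lemma hasSum_inner_projVec_mul (ψ : H) (M : H →L[ℂ] H) :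
    HasSum (fun i => ⟪(stdBasis H i : H), (projVec ψ * M) (stdBasis H i)⟫_ℂ) ⟪ψ, M ψ⟫_ℂ := by
  rw [← ContinuousLinearMap.adjoint_inner_left]
  refine ((stdBasis H).hasSum_inner_mul_inner (M.adjoint ψ) ψ).congr_fun fun i => ?_
  simp [projVec_eq_rankOne, ContinuousLinearMap.adjoint_inner_left]

lemma traceOp_projVec_mul (ψ : H) (M : H →L[ℂ] H) : traceOp (projVec ψ * M) = ⟪ψ, M ψ⟫_ℂ :=
  (hasSum_inner_projVec_mul ψ M).tsum_eq

lemma isDensity_projVec {ψ : H} (hψ : ‖ψ‖ = 1) : IsDensity (projVec ψ) := by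
  have hpos : 0 ≤ projVec ψ :=
    (ContinuousLinearMap.nonneg_iff_isPositive _).mpr (InnerProductSpace.isPositive_rankOne_self ψ)
  have hidem : projVec ψ * projVec ψ = projVec ψ :=
    InnerProductSpace.isIdempotentElem_rankOne_self hψ
  have habs : sqrtOp (star (projVec ψ) * projVec ψ) = projVec ψ := by
    rw [sqrtOp, hpos.isSelfAdjoint.star_eq, hidem]
    exact CFC.sqrt_unique hidem
  refine ⟨hpos, ?_, ?_⟩
  · rw [IsTraceClass, habs]
    simpa only [mul_one] using (hasSum_inner_projVec_mul ψ 1).summable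
  · simpa [hψ] using traceOp_projVec_mul ψ 1

lemma DualityCond.inner_apply_eq_traceOp {op : (H →L[ℂ] H) → (H →L[ℂ] H) → (H →L[ℂ] H)}
    (hdual : DualityCond op) {A C : H →L[ℂ] H} (hA : IsEffect A) (hC : IsEffect C) {ψ : H}
    (hψ : ‖ψ‖ = 1) : ⟪ψ, op A C ψ⟫_ℂ = traceOp (op A (projVec ψ) * C) := by
  rw [← traceOp_projVec_mul, (hdual A C _ hA hC (isDensity_projVec hψ)).2]

theorem duality_implies_homogeneous_general
    (op : (H →L[ℂ] H) → (H →L[ℂ] H) → (H →L[ℂ] H))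
    (hdual : DualityCond op) :
    ∀ A B : H →L[ℂ] H, IsEffect A → IsEffect B →
      ∀ l : ℝ, l ∈ Set.Icc (0 : ℝ) 1 →
        op A ((l : ℂ) • B) = (l : ℂ) • op A B := by
  intro A B hA hB l hl
  refine ext_inner_self_of_norm_eq_one fun ψ hψ => ?_
  rw [hdual.inner_apply_eq_traceOp hA (isEffect_ofReal_smul hB hl) hψ, mul_smul_comm,
    traceOp_smul, ← hdual.inner_apply_eq_traceOp hA hB hψ, smul_apply, inner_smul_right]

/-- If `∘ : E(H) × E(H) → E(H)` satisfies the duality condition, then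
`A ∘ (λB) = λ(A ∘ B)` for all effects `A, B` and all `λ ∈ [0,1]`. -/
theorem duality_implies_homogeneous
    (op : (H →L[ℂ] H) → (H →L[ℂ] H) → (H →L[ℂ] H)) (hmap : EffectClosed op)
    (hdual : DualityCond op) :
    ∀ A B : H →L[ℂ] H, IsEffect A → IsEffect B →
      ∀ l : ℝ, l ∈ Set.Icc (0 : ℝ) 1 →
        op A ((l : ℂ) • B) = (l : ℂ) • op A B :=
  duality_implies_homogeneous_general op hdual

end
end

section
/- Let H be a complex Hilbert space and let U be a unitary operator on H such that U*BU = UBU* for every effect B ∈ E(H). Then U² = μI for some complex number μ with |μ| = 1. -/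
/-!
Common setup: effects, density operators, trace, square roots and the strong
operator topology on a complex Hilbert space `H`, together with the five
conditions (duality, unit, weak associativity, continuity, purity) defining a
sequential product on the set `E(H)` of quantum effects.
-/

set_option maxHeartbeats 1000000
set_option synthInstance.maxHeartbeats 1000000

open scoped InnerProductSpace ComplexOrder
open Filter

noncomputable section

variable (H : Type*) [NormedAddCommGroup H] [InnerProductSpace ℂ H] [CompleteSpace H]

variable {H}

/-!
Conjugating `U*BU = UBU*` by `U` shows that `U²` commutes with every effect, in particular with the
orthogonal projection onto each line `ℂ ∙ x`. Hence `U²` maps every line into itself, so it is a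
scalar `μ`, and `|μ| = 1` because `U²` is unitary.
-/

lemma Unitary.commute_mul_self_of_star_mul_mul_eq {R : Type*} [Monoid R] [StarMul R] {u b : R}
    (hu : u ∈ unitary R) (h : star u * b * u = u * b * star u) : Commute b (u * u) :=
  calc b * (u * u) = (u * star u) * b * (u * u) := by rw [Unitary.mul_star_self_of_mem hu, one_mul]
    _ = u * (star u * b * u) * u := by simp only [mul_assoc]
    _ = u * (u * b * star u) * u := by rw [h]
    _ = (u * u) * b * (star u * u) := by simp only [mul_assoc]
    _ = (u * u) * b := by rw [Unitary.star_mul_self_of_mem hu, mul_one]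

lemma IsStarProjection.isEffect {p : H →L[ℂ] H} (hp : IsStarProjection p) : IsEffect p :=
  ⟨hp.nonneg, hp.le_one⟩

namespace ContinuousLinearMap

variable {𝕜 E : Type*} [RCLike 𝕜] [NormedAddCommGroup E] [InnerProductSpace 𝕜 E]

lemma exists_apply_eq_smul_of_commute_starProjection_span_singleton {T : E →L[𝕜] E} {x : E}
    (hT : Commute T (𝕜 ∙ x).starProjection) : ∃ c : 𝕜, T x = c • x := by
  have hx : (𝕜 ∙ x).starProjection x = x :=
    Submodule.starProjection_eq_self_iff.mpr (Submodule.mem_span_singleton_self x)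
  have hTx : T x ∈ 𝕜 ∙ x := by
    rw [← Submodule.starProjection_eq_self_iff, ← mul_apply_eq_comp, ← hT.eq,
      mul_apply_eq_comp, hx]
  obtain ⟨c, hc⟩ := Submodule.mem_span_singleton.mp hTx
  exact ⟨c, hc.symm⟩

lemma exists_eq_smul_one_of_forall_exists_apply_eq_smul {T : E →L[𝕜] E}
    (hT : ∀ x, ∃ c : 𝕜, T x = c • x) : ∃ c : 𝕜, T = c • 1 := by
  obtain ⟨c, hc⟩ := LinearMap.exists_eq_smul_id_of_forall_notLinearIndependent
    (f := (T : E →ₗ[𝕜] E)) fun x hind => by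
      obtain ⟨c, hc⟩ := hT x
      have := LinearIndependent.pair_iff.mp hind c (-1) (by simp [hc])
      exact one_ne_zero (neg_eq_zero.mp this.2)
  exact ⟨c, ext fun x => LinearMap.congr_fun hc x⟩

lemma exists_eq_smul_one_of_forall_commute_starProjection {T : E →L[𝕜] E}
    (hT : ∀ x : E, Commute T (𝕜 ∙ x).starProjection) : ∃ c : 𝕜, T = c • 1 :=
  exists_eq_smul_one_of_forall_exists_apply_eq_smul fun x =>
    exists_apply_eq_smul_of_commute_starProjection_span_singleton (hT x)

end ContinuousLinearMap

lemma norm_eq_one_of_smul_one_mem_unitary {𝕜 A : Type*} [NormedField 𝕜] [NormedRing A]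
    [StarRing A] [CStarRing A] [NormedAlgebra 𝕜 A] [NormOneClass A] {c : 𝕜}
    (hc : c • (1 : A) ∈ unitary A) : ‖c‖ = 1 := by
  have : Nontrivial A := NormOneClass.nontrivial
  simpa [norm_smul] using CStarRing.norm_of_mem_unitary hc

/-- If `U` is a unitary operator such that `U*BU = UBU*` for every effect `B`, then
`U² = μI` for some complex number `μ` with `|μ| = 1`. -/
theorem unitary_square_is_scalar
    (U : H →L[ℂ] H) (hU : U ∈ unitary (H →L[ℂ] H))
    (h : ∀ B : H →L[ℂ] H, IsEffect B → star U * B * U = U * B * star U) :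
    ∃ μ : ℂ, ‖μ‖ = 1 ∧ U * U = μ • (1 : H →L[ℂ] H) := by
  obtain ⟨μ, hμ⟩ := ContinuousLinearMap.exists_eq_smul_one_of_forall_commute_starProjection fun x =>
    (Unitary.commute_mul_self_of_star_mul_mul_eq hU
      (h _ isStarProjection_starProjection.isEffect)).symm
  rcases subsingleton_or_nontrivial H with _ | _
  · exact ⟨1, norm_one, Subsingleton.elim _ _⟩
  · exact ⟨μ, norm_eq_one_of_smul_one_mem_unitary (hμ ▸ mul_mem hU hU), hμ⟩

end
end

section
/- Let H be a complex Hilbert space. The map (A, B) ↦ A^{1/2}BA^{1/2} from E(H) × E(H) to E(H) is jointly continuous when E(H) is equipped with the strong operator topology. -/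
/-!
Common setup: effects, density operators, trace, square roots and the strong
operator topology on a complex Hilbert space `H`, together with the five
conditions (duality, unit, weak associativity, continuity, purity) defining a
sequential product on the set `E(H)` of quantum effects.
-/

set_option maxHeartbeats 1000000
set_option synthInstance.maxHeartbeats 1000000

open scoped InnerProductSpace ComplexOrder
open Filter

noncomputable section

variable (H : Type*) [NormedAddCommGroup H] [InnerProductSpace ℂ H] [CompleteSpace H]

variable {H}

/-! Operators of norm at most one compose jointly continuously for the strong operator
topology, so `A ↦ p(A)` is SOT-continuous on `E(H)` for every real polynomial `p`. By
Weierstrass, `√` is a uniform limit of polynomials on `[0, 1] ⊇ σ(A)`, so by the functional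
calculus `A^{1/2}` is a limit of polynomials in `A` uniformly over `E(H)`, and SOT-continuity
passes to the limit. -/

open Polynomial
open scoped Topology

theorem tendsto_of_forall_approx {α β : Type*} [PseudoMetricSpace β] {l : Filter α}
    {f : α → β} {b : β}
    (h : ∀ ε > 0, ∃ (g : α → β) (c : β),
      (∀ᶠ a in l, dist (f a) (g a) < ε) ∧ Tendsto g l (𝓝 c) ∧ dist c b < ε) :
    Tendsto f l (𝓝 b) := by
  refine Metric.tendsto_nhds.2 fun ε hε => ?_
  obtain ⟨g, c, hfg, hg, hcb⟩ := h (ε / 3) (by positivity)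
  filter_upwards [hfg, Metric.tendsto_nhds.1 hg (ε / 3) (by positivity)] with a hfa hga
  calc dist (f a) b ≤ dist (f a) (g a) + dist (g a) c + dist c b := dist_triangle4 _ _ _ _
    _ < ε := by linarith

section BoundedPointwiseConvergence

variable {α 𝕜 E F : Type*} [NontriviallyNormedField 𝕜]
  [SeminormedAddCommGroup E] [NormedSpace 𝕜 E] [SeminormedAddCommGroup F] [NormedSpace 𝕜 F]
  {l : Filter α} {C : ℝ}

theorem tendsto_apply_of_norm_le {T : α → E →L[𝕜] F} {S : E →L[𝕜] F}
    (hT_le : ∀ᶠ a in l, ‖T a‖ ≤ C) (hT : ∀ x, Tendsto (fun a => T a x) l (𝓝 (S x)))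
    {u : α → E} {x : E} (hu : Tendsto u l (𝓝 x)) :
    Tendsto (fun a => T a (u a)) l (𝓝 (S x)) := by
  have hsmall : Tendsto (fun a => T a (u a - x)) l (𝓝 0) := by
    refine squeeze_zero_norm' ?_ (by
      simpa using (tendsto_iff_norm_sub_tendsto_zero.1 hu).const_mul C)
    filter_upwards [hT_le] with a ha
    exact (T a).le_of_opNorm_le ha _
  simpa using hsmall.add (hT x)

theorem tendsto_pow_apply_of_norm_le {T : α → E →L[𝕜] E} {S : E →L[𝕜] E}
    (hT_le : ∀ᶠ a in l, ‖T a‖ ≤ C) (hT : ∀ x, Tendsto (fun a => T a x) l (𝓝 (S x)))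
    (n : ℕ) (x : E) : Tendsto (fun a => (T a ^ n) x) l (𝓝 ((S ^ n) x)) := by
  induction n generalizing x with
  | zero => simpa using tendsto_const_nhds
  | succ n ih =>
    simp only [pow_succ']
    exact tendsto_apply_of_norm_le hT_le hT (ih x)

end BoundedPointwiseConvergence

theorem tendsto_aeval_apply_of_norm_le {α E : Type*} [NormedAddCommGroup E] [NormedSpace ℂ E]
    {l : Filter α} {C : ℝ} {T : α → E →L[ℂ] E} {S : E →L[ℂ] E}
    (hT_le : ∀ᶠ a in l, ‖T a‖ ≤ C) (hT : ∀ x, Tendsto (fun a => T a x) l (𝓝 (S x)))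
    (q : ℝ[X]) (x : E) : Tendsto (fun a => aeval (T a) q x) l (𝓝 (aeval S q x)) := by
  simp only [aeval_eq_sum_range, sum_apply, smul_apply]
  exact tendsto_finsetSum _ fun i _ =>
    (tendsto_pow_apply_of_norm_le hT_le hT i x).const_smul _

omit [CompleteSpace H] in
theorem sot_tendsto_iff {α : Type*} {l : Filter α} {T : α → H →L[ℂ] H} {S : H →L[ℂ] H} :
    Tendsto T l (@nhds _ (sot H) S) ↔ ∀ x, Tendsto (fun a => T a x) l (𝓝 (S x)) := by
  rw [sot, nhds_induced, tendsto_comap_iff, tendsto_pi_nhds]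
  rfl

namespace IsEffect

variable {A : H →L[ℂ] H}

theorem norm_le_one (hA : IsEffect A) : ‖A‖ ≤ 1 :=
  (CStarAlgebra.norm_le_one_iff_of_nonneg A hA.1).2 hA.2

theorem spectrum_subset_Icc (hA : IsEffect A) : spectrum ℝ A ⊆ Set.Icc 0 1 := fun t ht =>
  ⟨spectrum_nonneg_of_nonneg hA.1 ht, (CFC.le_one_iff A (.of_nonneg hA.1)).1 hA.2 t ht⟩

theorem sqrtOp_eq_cfc (hA : IsEffect A) : sqrtOp A = cfc Real.sqrt A := by
  rw [sqrtOp, CFC.sqrt_eq_real_sqrt A hA.1, cfcₙ_eq_cfc]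

theorem norm_sqrtOp_le_one (hA : IsEffect A) : ‖sqrtOp A‖ ≤ 1 := by
  rw [hA.sqrtOp_eq_cfc]
  refine norm_cfc_le zero_le_one fun t ht => ?_
  rw [Real.norm_of_nonneg (Real.sqrt_nonneg t)]
  exact Real.sqrt_le_one.2 (hA.spectrum_subset_Icc ht).2

end IsEffect

theorem exists_polynomial_norm_sqrtOp_sub_aeval_lt {ε : ℝ} (hε : 0 < ε) :
    ∃ P : ℝ[X], ∀ A : H →L[ℂ] H, IsEffect A → ‖sqrtOp A - aeval A P‖ < ε := by
  obtain ⟨P, hP⟩ := exists_polynomial_near_of_continuousOn 0 1 Real.sqrt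
    Real.continuous_sqrt.continuousOn (ε / 2) (half_pos hε)
  refine ⟨P, fun A hA => ?_⟩
  have hsa : IsSelfAdjoint A := .of_nonneg hA.1
  rw [hA.sqrtOp_eq_cfc, ← cfc_polynomial P A, ← cfc_sub Real.sqrt P.eval A]
  refine (norm_cfc_le (half_pos hε).le fun t ht => ?_).trans_lt (half_lt_self hε)
  rw [Real.norm_eq_abs, abs_sub_comm]
  exact (hP t (hA.spectrum_subset_Icc ht)).le

theorem tendsto_sqrtOp_apply {α : Type*} {l : Filter α} {T : α → H →L[ℂ] H} {S : H →L[ℂ] H}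
    (hT_eff : ∀ᶠ a in l, IsEffect (T a)) (hS : IsEffect S)
    (hT : ∀ x, Tendsto (fun a => T a x) l (𝓝 (S x))) (x : H) :
    Tendsto (fun a => sqrtOp (T a) x) l (𝓝 (sqrtOp S x)) := by
  refine tendsto_of_forall_approx fun ε hε => ?_
  obtain ⟨P, hP⟩ := exists_polynomial_norm_sqrtOp_sub_aeval_lt (H := H) (div_pos hε (by positivity : (0 : ℝ) < ‖x‖ + 1))
  have happrox : ∀ A : H →L[ℂ] H, IsEffect A → dist (sqrtOp A x) (aeval A P x) < ε := by
    intro A hA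
    rw [dist_eq_norm, ← sub_apply]
    calc ‖(sqrtOp A - aeval A P) x‖ ≤ ε / (‖x‖ + 1) * ‖x‖ :=
          (sqrtOp A - aeval A P).le_of_opNorm_le (hP A hA).le x
      _ < ε := by rw [div_mul_eq_mul_div, div_lt_iff₀ (by positivity)]; nlinarith
  refine ⟨fun a => aeval (T a) P x, aeval S P x, ?_, ?_, ?_⟩
  · filter_upwards [hT_eff] with a ha using happrox _ ha
  · exact tendsto_aeval_apply_of_norm_le (hT_eff.mono fun a ha => ha.norm_le_one) hT P x
  · rw [dist_comm]
    exact happrox S hS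

/-- The map `(A, B) ↦ A^{1/2} B A^{1/2}` is jointly continuous on `E(H) × E(H)` for the
strong operator topology. -/
theorem standard_product_jointly_sot_continuous :
    @ContinuousOn ((H →L[ℂ] H) × (H →L[ℂ] H)) (H →L[ℂ] H)
      (@instTopologicalSpaceProd _ _ (sot H) (sot H)) (sot H)
      (fun p => sqrtOp p.1 * p.2 * sqrtOp p.1)
      {p | IsEffect p.1 ∧ IsEffect p.2} := by
  let : TopologicalSpace (H →L[ℂ] H) := sot H
  rintro ⟨A, B⟩ ⟨hA, hB⟩
  set l := 𝓝[{p : (H →L[ℂ] H) × (H →L[ℂ] H) | IsEffect p.1 ∧ IsEffect p.2}] (A, B)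
  have hEff : ∀ᶠ p in l, IsEffect p.1 ∧ IsEffect p.2 := self_mem_nhdsWithin
  have hfst : ∀ x, Tendsto (fun p : (H →L[ℂ] H) × (H →L[ℂ] H) => p.1 x) l (𝓝 (A x)) :=
    sot_tendsto_iff.1 ((continuous_fst.tendsto (A, B)).mono_left nhdsWithin_le_nhds)
  have hsnd : ∀ x, Tendsto (fun p : (H →L[ℂ] H) × (H →L[ℂ] H) => p.2 x) l (𝓝 (B x)) :=
    sot_tendsto_iff.1 ((continuous_snd.tendsto (A, B)).mono_left nhdsWithin_le_nhds)
  have hsqrt := tendsto_sqrtOp_apply (hEff.mono fun _ hp => hp.1) hA hfst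
  have hsqrt_le : ∀ᶠ p in l, ‖sqrtOp p.1‖ ≤ 1 := hEff.mono fun _ hp => hp.1.norm_sqrtOp_le_one
  have hsnd_le : ∀ᶠ p in l, ‖p.2‖ ≤ 1 := hEff.mono fun _ hp => hp.2.norm_le_one
  exact sot_tendsto_iff.2 fun x => tendsto_apply_of_norm_le hsqrt_le hsqrt
    (tendsto_apply_of_norm_le hsnd_le hsnd (hsqrt x))

end
end
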